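/- Let 1 ≤ q < p < ∞, let ω be a weight on the upper half-plane 𝓗 belonging to the Békollé–Bonami class B_p, and let μ be a positive Borel measure on 𝓗 such that the function K_μ(z) = sup {μ(Q_I)/ω(Q_I) : I ⊂ ℝ a bounded interval with z ∈ Q_I} belongs to L^s_ω(𝓗), where s = p/(p−q). Then there is a constant C > 0 such that for every f ∈ L^p_ω(𝓗), (∫_𝓗 (M_{d,ω} f(z))^q dμ(z))^{1/q} ≤ C ‖f‖_{p,ω}. -/

import Mathlib

/-!
Dyadic Carleson boxes are either nested or disjoint, so each superlevel set `{M g > λ}` of the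
dyadic maximal function of `g` with respect to `ν = ω dV` is a disjoint union of maximal dyadic
boxes `Q` on which the `ν`-average of `g` exceeds `λ`. On each of them `μ(Q) ≤ ∫_Q K dν`, where
`K ≤ K_μ` is the dyadic version of `K_μ`. Hence the distribution function of `M g` under `μ` is
dominated by the one under `K ν`, and by the layer cake formula `∫ (M g)^q dμ ≤ ∫ (M g)^q K dν`.
Hölder's inequality with exponents `p/q` and `s = p/(p-q)`, followed by Doob's inequality
`‖M g‖_{L^p(ν)} ≤ C_p ‖g‖_{L^p(ν)}`, finishes the proof.
-/

open MeasureTheory Set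
open scoped ENNReal NNReal

noncomputable section

/-- The upper half-plane `𝓗`. -/
def UHP : Set ℂ := {z : ℂ | 0 < z.im}

/-- The Carleson box `Q_I` over the bounded interval `I = [a, b)`. -/
def Box (a b : ℝ) : Set ℂ := {z : ℂ | z.re ∈ Set.Ico a b ∧ z.im ∈ Set.Ioo 0 (b - a)}

/-- The `ω`-mass of a set, `ω(S) = ∫_S ω dV`. -/
def wMass (ω : ℂ → ℝ≥0∞) (S : Set ℂ) : ℝ≥0∞ := ∫⁻ z in S, ω z

/-- The Carleson box over the standard dyadic interval `[m·2^j, (m+1)·2^j)`. -/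
def dBox (j m : ℤ) : Set ℂ := Box ((2 : ℝ) ^ j * (m : ℝ)) ((2 : ℝ) ^ j * ((m : ℝ) + 1))

/-- The dyadic weighted maximal function `M_{d,ω} f` (standard dyadic grid). -/
def maxDW (ω : ℂ → ℝ≥0∞) (f : ℂ → ℂ) (z : ℂ) : ℝ≥0∞ :=
  ⨆ (j : ℤ) (m : ℤ) (_ : z ∈ dBox j m),
    (wMass ω (dBox j m))⁻¹ * ∫⁻ w in dBox j m, (‖f w‖₊ : ℝ≥0∞) * ω w

/-- The Békollé–Bonami constant `[ω]_{B_p}`. -/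
def BBconst (ω : ℂ → ℝ≥0∞) (p : ℝ) : ℝ≥0∞ :=
  ⨆ (a : ℝ) (b : ℝ) (_ : a < b),
    ((volume (Box a b))⁻¹ * wMass ω (Box a b)) *
      ((volume (Box a b))⁻¹ * ∫⁻ z in Box a b, ω z ^ (1 - p / (p - 1))) ^ (p - 1)

/-- `K_μ(z) = sup { μ(Q_I)/ω(Q_I) : I ⊂ ℝ a bounded interval with z ∈ Q_I }`. -/
def Kmu (ω : ℂ → ℝ≥0∞) (μ : Measure ℂ) (z : ℂ) : ℝ≥0∞ :=
  ⨆ (a : ℝ) (b : ℝ) (_ : a < b) (_ : z ∈ Box a b), μ (Box a b) / wMass ω (Box a b)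

lemma mem_dBox {z : ℂ} {j m : ℤ} :
    z ∈ dBox j m ↔ ⌊z.re / 2 ^ j⌋ = m ∧ z.im ∈ Ioo 0 ((2 : ℝ) ^ j) := by
  have h2 : (0 : ℝ) < 2 ^ j := zpow_pos two_pos j
  rw [Int.floor_eq_iff, le_div_iff₀ h2, div_lt_iff₀ h2]
  simp only [dBox, Box, mem_ofPred_eq, mem_Ico, mem_Ioo]
  constructor <;> rintro ⟨⟨h1, h2⟩, h3, h4⟩ <;> exact ⟨⟨by linarith, by linarith⟩, h3, by linarith⟩

lemma measurableSet_dBox (j m : ℤ) : MeasurableSet (dBox j m) :=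
  (measurableSet_Ico.preimage Complex.measurable_re).inter
    (measurableSet_Ioo.preimage Complex.measurable_im)

lemma measurableSet_UHP : MeasurableSet UHP :=
  measurableSet_lt measurable_const Complex.measurable_im

lemma dBox_subset_UHP (j m : ℤ) : dBox j m ⊆ UHP := fun _ hz => (mem_dBox.mp hz).2.1

lemma eq_of_mem_dBox {j m m' : ℤ} {z : ℂ} (h : z ∈ dBox j m) (h' : z ∈ dBox j m') : m = m' :=
  (mem_dBox.mp h).1.symm.trans (mem_dBox.mp h').1

lemma dBox_subset_of_le {j j' m m' : ℤ} (hj : j ≤ j') {z : ℂ} (hz : z ∈ dBox j m)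
    (hz' : z ∈ dBox j' m') : dBox j m ⊆ dBox j' m' := by
  obtain ⟨k, rfl⟩ := Int.le.dest hj
  have floor_eq (x : ℝ) : ⌊x / 2 ^ (j + k)⌋ = ⌊x / 2 ^ j⌋ / (2 ^ k : ℕ) := by
    rw [zpow_add₀ two_ne_zero, ← div_div, ← Int.floor_div_natCast]
    push_cast
    rfl
  intro w hw
  rw [mem_dBox] at hz hz' hw ⊢
  refine ⟨by rw [floor_eq, hw.1, ← hz.1, ← floor_eq, hz'.1], hw.2.1, ?_⟩
  exact hw.2.2.trans_le (zpow_le_zpow_right₀ one_le_two hj)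

lemma le_of_dBox_subset {j j' m m' : ℤ} (h : dBox j m ⊆ dBox j' m') : j ≤ j' := by
  by_contra! hlt
  have h2 : (0 : ℝ) < 2 ^ j := zpow_pos two_pos j
  have hz : (⟨2 ^ j * m, 2 ^ j / 2⟩ : ℂ) ∈ dBox j m := by
    rw [mem_dBox]
    refine ⟨?_, by positivity, by linarith⟩
    simp [mul_div_cancel_left₀ _ h2.ne']
  have hlt' : (2 : ℝ) ^ j / 2 < 2 ^ j' := (mem_dBox.mp (h hz)).2.2
  have hle : (2 : ℝ) ^ j' ≤ 2 ^ j / 2 := by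
    rw [div_eq_mul_inv, ← zpow_sub_one₀ two_ne_zero]
    exact zpow_le_zpow_right₀ one_le_two (Int.le_sub_one_of_lt hlt)
  exact hle.not_gt hlt'

def maxDyadic (S : Set (ℤ × ℤ)) : Set (ℤ × ℤ) :=
  {x ∈ S | ∀ y ∈ S, dBox x.1 x.2 ⊆ dBox y.1 y.2 → x = y}

lemma pairwiseDisjoint_maxDyadic (S : Set (ℤ × ℤ)) :
    (maxDyadic S).PairwiseDisjoint fun x => dBox x.1 x.2 := by
  have key : ∀ x ∈ maxDyadic S, ∀ y ∈ maxDyadic S, x.1 ≤ y.1 →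
      ¬Disjoint (dBox x.1 x.2) (dBox y.1 y.2) → x = y := by
    rintro x hx y hy hle hmeet
    obtain ⟨z, hz, hz'⟩ := not_disjoint_iff.mp hmeet
    exact hx.2 y hy.1 (dBox_subset_of_le hle hz hz')
  intro x hx y hy hne
  by_contra hmeet
  rcases le_total x.1 y.1 with h | h
  · exact hne (key x hx y hy h hmeet)
  · exact hne (key y hy x hx h fun hd => hmeet hd.symm).symm

lemma biUnion_maxDyadic {S : Set (ℤ × ℤ)} {N : ℤ} (hS : ∀ x ∈ S, x.1 ≤ N) :
    ⋃ x ∈ maxDyadic S, dBox x.1 x.2 = ⋃ x ∈ S, dBox x.1 x.2 := by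
  refine (biUnion_subset_biUnion_left fun x hx => hx.1).antisymm
    (iUnion₂_subset fun x hx z hz => ?_)
  obtain ⟨j, ⟨m, hmS, hzm⟩, hmax⟩ :=
    Int.exists_greatest_of_bdd (P := fun j => ∃ m, (j, m) ∈ S ∧ z ∈ dBox j m)
      ⟨N, fun j ⟨m, hm, _⟩ => hS _ hm⟩ ⟨x.1, x.2, hx, hz⟩
  refine mem_biUnion ⟨hmS, ?_⟩ hzm
  rintro ⟨j', m'⟩ hy hsub
  obtain rfl := le_antisymm (le_of_dBox_subset hsub) (hmax j' ⟨m', hy, hsub hzm⟩)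
  rw [eq_of_mem_dBox hzm (hsub hzm)]

lemma measure_biUnion_dBox_le {ρ κ : Measure ℂ} {S : Set (ℤ × ℤ)} {N : ℤ}
    (hS : ∀ x ∈ S, x.1 ≤ N) (hρκ : ∀ x ∈ S, ρ (dBox x.1 x.2) ≤ κ (dBox x.1 x.2)) :
    ρ (⋃ x ∈ S, dBox x.1 x.2) ≤ κ (⋃ x ∈ S, dBox x.1 x.2) := by
  rw [← biUnion_maxDyadic hS]
  calc ρ (⋃ x ∈ maxDyadic S, dBox x.1 x.2) ≤ ∑' x : maxDyadic S, ρ (dBox x.1.1 x.1.2) :=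
        measure_biUnion_le ρ (to_countable _) _
    _ ≤ ∑' x : maxDyadic S, κ (dBox x.1.1 x.1.2) := ENNReal.tsum_le_tsum fun x => hρκ x x.2.1
    _ = κ (⋃ x ∈ maxDyadic S, dBox x.1 x.2) :=
        (measure_biUnion (to_countable _) (pairwiseDisjoint_maxDyadic S)
          fun x _ => measurableSet_dBox x.1 x.2).symm

/-- Junk value: the average is `0` when `ν (dBox j m)` is `0` or `∞`. -/
def dAvg (ν : Measure ℂ) (g : ℂ → ℝ≥0∞) (j m : ℤ) : ℝ≥0∞ :=
  (ν (dBox j m))⁻¹ * ∫⁻ w in dBox j m, g w ∂ν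

def dMax (ν : Measure ℂ) (g : ℂ → ℝ≥0∞) (z : ℂ) : ℝ≥0∞ :=
  ⨆ (j : ℤ) (m : ℤ) (_ : z ∈ dBox j m), dAvg ν g j m

lemma measurable_iSup_dBox (c : ℤ → ℤ → ℝ≥0∞) :
    Measurable fun z : ℂ => ⨆ (j : ℤ) (m : ℤ) (_ : z ∈ dBox j m), c j m := by
  refine Measurable.iSup fun j => Measurable.iSup fun m => ?_
  have : (fun z => ⨆ _ : z ∈ dBox j m, c j m) = (dBox j m).indicator fun _ => c j m := by
    ext z
    by_cases hz : z ∈ dBox j m <;> simp [hz]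
  exact this ▸ measurable_const.indicator (measurableSet_dBox j m)

lemma measurable_dMax (ν : Measure ℂ) (g : ℂ → ℝ≥0∞) : Measurable (dMax ν g) :=
  measurable_iSup_dBox _

lemma lt_dMax_iff {ν : Measure ℂ} {g : ℂ → ℝ≥0∞} {c : ℝ≥0∞} {z : ℂ} :
    c < dMax ν g z ↔ ∃ j m, z ∈ dBox j m ∧ c < dAvg ν g j m := by
  simp only [dMax, lt_iSup_iff, exists_prop]

lemma mul_measure_le_of_le_dAvg {ν : Measure ℂ} {g : ℂ → ℝ≥0∞} {c : ℝ≥0∞} {j m : ℤ}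
    (h : c ≤ dAvg ν g j m) : c * ν (dBox j m) ≤ ∫⁻ w in dBox j m, g w ∂ν :=
  ENNReal.mul_le_of_le_div (by rwa [ENNReal.div_eq_inv_mul])

lemma measure_dBox_ne_zero_ne_top_of_lt_dAvg {ν : Measure ℂ} {g : ℂ → ℝ≥0∞} {c : ℝ≥0∞}
    {j m : ℤ} (h : c < dAvg ν g j m) : ν (dBox j m) ≠ 0 ∧ ν (dBox j m) ≠ ∞ := by
  refine ⟨fun h0 => ?_, fun htop => ?_⟩
  · simp [dAvg, Measure.restrict_eq_zero.mpr h0] at h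
  · simp [dAvg, htop] at h

lemma measure_lt_dMax_le {ν ρ κ : Measure ℂ} {g : ℂ → ℝ≥0∞} {c : ℝ≥0∞}
    (h : ∀ j m, c < dAvg ν g j m → ρ (dBox j m) ≤ κ (dBox j m)) :
    ρ {z | c < dMax ν g z} ≤ κ {z | c < dMax ν g z} := by
  set S : ℕ → Set (ℤ × ℤ) := fun N => {x | x.1 ≤ N ∧ c < dAvg ν g x.1 x.2}
  have hcover : {z | c < dMax ν g z} = ⋃ N : ℕ, ⋃ x ∈ S N, dBox x.1 x.2 := by
    ext z
    simp only [mem_ofPred_eq, lt_dMax_iff, mem_iUnion, exists_prop]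
    constructor
    · rintro ⟨j, m, hz, hlt⟩
      exact ⟨j.toNat, (j, m), ⟨Int.self_le_toNat j, hlt⟩, hz⟩
    · rintro ⟨N, x, ⟨-, hlt⟩, hz⟩
      exact ⟨x.1, x.2, hz, hlt⟩
  have hmono : Monotone fun N : ℕ => ⋃ x ∈ S N, dBox x.1 x.2 := fun N N' hN =>
    biUnion_subset_biUnion_left fun x hx => ⟨hx.1.trans (by exact_mod_cast hN), hx.2⟩
  rw [hcover, hmono.measure_iUnion]
  exact iSup_le fun N => (measure_biUnion_dBox_le (fun x hx => hx.1) fun x hx => h _ _ hx.2).trans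
    (measure_mono (subset_iUnion (fun N => ⋃ x ∈ S N, dBox x.1 x.2) N))

section LayerCake

variable {α : Type*} [MeasurableSpace α]

lemma lintegral_Ioi_ofReal_rpow_eq_top (s : ℝ) :
    ∫⁻ t in Ioi (0 : ℝ), ENNReal.ofReal (t ^ s) = ∞ := by
  by_contra h
  refine not_integrableOn_Ioi_rpow s ((lintegral_ofReal_ne_top_iff_integrable ?_ ?_).mp h)
  · exact (measurable_id.pow_const s).aestronglyMeasurable
  · filter_upwards [ae_restrict_mem measurableSet_Ioi] with t ht using Real.rpow_nonneg ht.out.le s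

lemma lintegral_rpow_eq_lintegral_meas_ofReal_lt_mul (ρ : Measure α) {h : α → ℝ≥0∞}
    (hh : Measurable h) {r : ℝ} (hr : 0 < r) :
    ∫⁻ z, h z ^ r ∂ρ = ENNReal.ofReal r *
      ∫⁻ t in Ioi (0 : ℝ), ρ {z | ENNReal.ofReal t < h z} * ENNReal.ofReal (t ^ (r - 1)) := by
  by_cases hnull : ρ {z | h z = ∞} = 0
  · have hfin : ∀ᵐ z ∂ρ, h z ≠ ∞ := measure_eq_zero_iff_ae_notMem.mp hnull
    have hlhs : ∫⁻ z, h z ^ r ∂ρ = ∫⁻ z, ENNReal.ofReal ((h z).toReal ^ r) ∂ρ := by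
      refine lintegral_congr_ae (hfin.mono fun z hz => ?_)
      change h z ^ r = ENNReal.ofReal ((h z).toReal ^ r)
      rw [← ENNReal.ofReal_rpow_of_nonneg ENNReal.toReal_nonneg hr.le, ENNReal.ofReal_toReal hz]
    rw [hlhs, lintegral_rpow_eq_lintegral_meas_lt_mul ρ (ae_of_all _ fun _ => ENNReal.toReal_nonneg)
      hh.ennreal_toReal.aemeasurable hr]
    congr 1
    refine setLIntegral_congr_fun measurableSet_Ioi fun t ht => ?_
    congr 1
    refine measure_congr (Filter.eventuallyEq_set.mpr (hfin.mono fun z hz => ?_))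
    exact (ENNReal.ofReal_lt_iff_lt_toReal ht.out.le hz).symm
  · have hlhs : ∫⁻ z, h z ^ r ∂ρ = ∞ := by
      refine lintegral_eq_top_of_measure_eq_top_ne_zero (hh.pow_const r).aemeasurable ?_
      simpa only [ENNReal.rpow_eq_top_iff_of_pos hr] using hnull
    have hrhs : ∫⁻ t in Ioi (0 : ℝ), ρ {z | ENNReal.ofReal t < h z} * ENNReal.ofReal (t ^ (r - 1))
        = ∞ := by
      refine eq_top_iff.mpr ?_
      calc ∞ = ∫⁻ t in Ioi (0 : ℝ), ρ {z | h z = ∞} * ENNReal.ofReal (t ^ (r - 1)) := by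
            rw [lintegral_const_mul _
                (by fun_prop : Measurable fun t : ℝ => ENNReal.ofReal (t ^ (r - 1))),
              lintegral_Ioi_ofReal_rpow_eq_top, ENNReal.mul_top hnull]
      _ ≤ _ := lintegral_mono fun t => mul_le_mul_left (measure_mono fun z (hz : h z = ∞) =>
            show ENNReal.ofReal t < h z from hz ▸ ENNReal.ofReal_lt_top) _
    rw [hlhs, hrhs, ENNReal.mul_top (ENNReal.ofReal_pos.mpr hr).ne']

lemma lintegral_rpow_le_of_forall_measure_lt_le {ρ κ : Measure α} {h : α → ℝ≥0∞}
    (hh : Measurable h) {r : ℝ} (hr : 0 < r)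
    (hρκ : ∀ c, ρ {z | c < h z} ≤ κ {z | c < h z}) :
    ∫⁻ z, h z ^ r ∂ρ ≤ ∫⁻ z, h z ^ r ∂κ := by
  rw [lintegral_rpow_eq_lintegral_meas_ofReal_lt_mul ρ hh hr,
    lintegral_rpow_eq_lintegral_meas_ofReal_lt_mul κ hh hr]
  exact mul_le_mul_right (lintegral_mono fun t => mul_le_mul_left (hρκ _) _) _

end LayerCake

lemma measure_lt_dMax_le_lintegral (ν : Measure ℂ) (g : ℂ → ℝ≥0∞) {c : ℝ≥0∞} (h0 : c ≠ 0)
    (htop : c ≠ ∞) : ν {z | c < dMax ν g z} ≤ c⁻¹ * ∫⁻ z, g z ∂ν := by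
  have hbox (j m : ℤ) (hlt : c < dAvg ν g j m) :
      ν (dBox j m) ≤ (c⁻¹ • ν.withDensity g) (dBox j m) := by
    rw [Measure.smul_apply, withDensity_apply _ (measurableSet_dBox j m), smul_eq_mul,
      ← ENNReal.inv_mul_cancel_left h0 htop (b := ν (dBox j m))]
    exact mul_le_mul_right (mul_measure_le_of_le_dAvg hlt.le) _
  calc ν {z | c < dMax ν g z} ≤ (c⁻¹ • ν.withDensity g) {z | c < dMax ν g z} :=
        measure_lt_dMax_le hbox
    _ ≤ (c⁻¹ • ν.withDensity g) univ := measure_mono (subset_univ _)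
    _ = c⁻¹ * ∫⁻ z, g z ∂ν := by
        rw [Measure.smul_apply, withDensity_apply _ MeasurableSet.univ, Measure.restrict_univ,
          smul_eq_mul]

lemma dAvg_mono {ν : Measure ℂ} {g h : ℂ → ℝ≥0∞} (hgh : g ≤ h) (j m : ℤ) :
    dAvg ν g j m ≤ dAvg ν h j m :=
  mul_le_mul_right (lintegral_mono hgh) _

lemma dAvg_add_const_le (ν : Measure ℂ) (g : ℂ → ℝ≥0∞) (c : ℝ≥0∞) (j m : ℤ) :
    dAvg ν (fun w => g w + c) j m ≤ dAvg ν g j m + c := by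
  rw [dAvg, dAvg, lintegral_add_right _ measurable_const, setLIntegral_const, mul_add,
    mul_left_comm]
  exact add_le_add_right ((mul_le_mul_right (ENNReal.inv_mul_le_one _) c).trans_eq (mul_one c)) _

lemma ofReal_half_lt_iff {t : ℝ} {a : ℝ≥0∞} :
    ENNReal.ofReal (t / 2) < a ↔ ENNReal.ofReal t < 2 * a := by
  rw [← ENNReal.mul_lt_mul_iff_right two_ne_zero ENNReal.ofNat_ne_top, ← ENNReal.ofReal_ofNat 2,
    ← ENNReal.ofReal_mul zero_le_two, mul_div_cancel₀ _ two_ne_zero]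

/-- The part of `g` below `t / 2` cannot push the maximal function above `t`. -/
lemma measure_ofReal_lt_dMax_le (ν : Measure ℂ) {g : ℂ → ℝ≥0∞} (hg : Measurable g) {t : ℝ}
    (ht : 0 < t) : ν {z | ENNReal.ofReal t < dMax ν g z} ≤
      (ENNReal.ofReal (t / 2))⁻¹ * ν.withDensity g {z | ENNReal.ofReal t < 2 * g z} := by
  set S := {z | ENNReal.ofReal t < 2 * g z}
  have hS : MeasurableSet S := (measurable_const.mul hg) measurableSet_Ioi
  have hsplit : g ≤ fun w => S.indicator g w + ENNReal.ofReal (t / 2) := fun w => by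
    change g w ≤ S.indicator g w + _
    by_cases hw : w ∈ S
    · exact (indicator_of_mem hw g).symm.trans_le le_self_add
    · rw [indicator_of_notMem hw, zero_add]
      exact not_lt.mp fun hlt => hw (ofReal_half_lt_iff.mp hlt)
  have hsub : {z | ENNReal.ofReal t < dMax ν g z} ⊆
      {z | ENNReal.ofReal (t / 2) < dMax ν (S.indicator g) z} := fun z hz => by
    obtain ⟨j, m, hzQ, hlt⟩ := lt_dMax_iff.mp hz
    refine lt_dMax_iff.mpr ⟨j, m, hzQ, lt_of_not_ge fun hle => hlt.not_ge ?_⟩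
    calc dAvg ν g j m ≤ dAvg ν (S.indicator g) j m + ENNReal.ofReal (t / 2) :=
          (dAvg_mono hsplit j m).trans (dAvg_add_const_le ν _ _ j m)
      _ ≤ ENNReal.ofReal (t / 2) + ENNReal.ofReal (t / 2) := add_le_add_left hle _
      _ = ENNReal.ofReal t := by
          rw [← ENNReal.ofReal_add (by positivity) (by positivity), add_halves]
  calc ν {z | ENNReal.ofReal t < dMax ν g z}
      ≤ ν {z | ENNReal.ofReal (t / 2) < dMax ν (S.indicator g) z} := measure_mono hsub
    _ ≤ (ENNReal.ofReal (t / 2))⁻¹ * ∫⁻ z, S.indicator g z ∂ν :=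
        measure_lt_dMax_le_lintegral ν _ (ENNReal.ofReal_pos.mpr (half_pos ht)).ne'
          ENNReal.ofReal_ne_top
    _ = _ := by rw [lintegral_indicator hS, withDensity_apply _ hS]

lemma ENNReal.rpow_sub_one_mul_self (x : ℝ≥0∞) {p : ℝ} (hp : 1 ≤ p) : x ^ (p - 1) * x = x ^ p := by
  conv_rhs => rw [← sub_add_cancel p 1, ENNReal.rpow_add_of_nonneg _ _ (sub_nonneg.mpr hp)
    zero_le_one, ENNReal.rpow_one]

/-- Doob's inequality, from the weak (1,1) bound through the layer cake formula. -/
theorem lintegral_dMax_rpow_le (ν : Measure ℂ) {g : ℂ → ℝ≥0∞} (hg : Measurable g) {p : ℝ}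
    (hp : 1 < p) :
    ∫⁻ z, dMax ν g z ^ p ∂ν ≤ ENNReal.ofReal (2 ^ p * p / (p - 1)) * ∫⁻ z, g z ^ p ∂ν := by
  have hp1 : 0 < p - 1 := sub_pos.mpr hp
  set νg := ν.withDensity g
  have h2g : Measurable fun z => 2 * g z := measurable_const.mul hg
  have hlevel : ∀ t ∈ Ioi (0 : ℝ),
      ν {z | ENNReal.ofReal t < dMax ν g z} * ENNReal.ofReal (t ^ (p - 1)) ≤
        ENNReal.ofReal (2 / (p - 1)) * (ENNReal.ofReal (p - 1) *
          (νg {z | ENNReal.ofReal t < 2 * g z} * ENNReal.ofReal (t ^ (p - 1 - 1)))) := by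
    intro t (ht : 0 < t)
    have hreal : (t / 2)⁻¹ * t ^ (p - 1) = 2 / (p - 1) * ((p - 1) * t ^ (p - 1 - 1)) := by
      rw [Real.rpow_sub_one ht.ne' (p - 1)]
      field_simp
    calc ν {z | ENNReal.ofReal t < dMax ν g z} * ENNReal.ofReal (t ^ (p - 1))
        ≤ (ENNReal.ofReal (t / 2))⁻¹ * νg {z | ENNReal.ofReal t < 2 * g z} *
            ENNReal.ofReal (t ^ (p - 1)) :=
          mul_le_mul_left (measure_ofReal_lt_dMax_le ν hg ht) _
      _ = ENNReal.ofReal ((t / 2)⁻¹ * t ^ (p - 1)) * νg {z | ENNReal.ofReal t < 2 * g z} := by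
          rw [ENNReal.ofReal_mul (by positivity), ENNReal.ofReal_inv_of_pos (by positivity)]
          ring
      _ = _ := by
          rw [hreal, ENNReal.ofReal_mul (by positivity), ENNReal.ofReal_mul hp1.le]
          ring
  have hνg : ∫⁻ z, (2 * g z) ^ (p - 1) ∂νg = 2 ^ (p - 1) * ∫⁻ z, g z ^ p ∂ν := by
    rw [lintegral_withDensity_eq_lintegral_mul ν hg (h2g.pow_const _),
      ← lintegral_const_mul _ (hg.pow_const _)]
    refine lintegral_congr fun z => ?_
    simp only [Pi.mul_apply]
    rw [ENNReal.mul_rpow_of_nonneg _ _ hp1.le, mul_left_comm, mul_comm (g z),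
      ENNReal.rpow_sub_one_mul_self _ hp.le]
  have hconst : ENNReal.ofReal p * (ENNReal.ofReal (2 / (p - 1)) * 2 ^ (p - 1)) =
      ENNReal.ofReal (2 ^ p * p / (p - 1)) := by
    rw [← ENNReal.ofReal_ofNat 2, ENNReal.ofReal_rpow_of_pos two_pos,
      ← ENNReal.ofReal_mul (by positivity), ← ENNReal.ofReal_mul (by positivity),
      Real.rpow_sub_one two_ne_zero]
    congr 1
    field_simp
  calc ∫⁻ z, dMax ν g z ^ p ∂ν
      = ENNReal.ofReal p * ∫⁻ t in Ioi (0 : ℝ),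
          ν {z | ENNReal.ofReal t < dMax ν g z} * ENNReal.ofReal (t ^ (p - 1)) :=
        lintegral_rpow_eq_lintegral_meas_ofReal_lt_mul ν (measurable_dMax ν g) (by positivity)
    _ ≤ ENNReal.ofReal p * (ENNReal.ofReal (2 / (p - 1)) * ∫⁻ z, (2 * g z) ^ (p - 1) ∂νg) := by
        rw [lintegral_rpow_eq_lintegral_meas_ofReal_lt_mul νg h2g hp1]
        refine mul_le_mul_right ((setLIntegral_mono' measurableSet_Ioi hlevel).trans_eq ?_) _
        rw [lintegral_const_mul' _ _ ENNReal.ofReal_ne_top,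
          lintegral_const_mul' _ _ ENNReal.ofReal_ne_top]
    _ = ENNReal.ofReal (2 ^ p * p / (p - 1)) * ∫⁻ z, g z ^ p ∂ν := by
        rw [hνg, ← hconst]
        ring

def dKmu (ν μ : Measure ℂ) (z : ℂ) : ℝ≥0∞ :=
  ⨆ (j : ℤ) (m : ℤ) (_ : z ∈ dBox j m), μ (dBox j m) / ν (dBox j m)

lemma measurable_dKmu (ν μ : Measure ℂ) : Measurable (dKmu ν μ) :=
  measurable_iSup_dBox _

lemma measure_dBox_le_setLIntegral_dKmu {ν μ : Measure ℂ} {j m : ℤ} (h0 : ν (dBox j m) ≠ 0)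
    (htop : ν (dBox j m) ≠ ∞) : μ (dBox j m) ≤ ∫⁻ z in dBox j m, dKmu ν μ z ∂ν := by
  calc μ (dBox j m) = ∫⁻ _ in dBox j m, μ (dBox j m) / ν (dBox j m) ∂ν := by
        rw [setLIntegral_const, ENNReal.div_mul_cancel h0 htop]
    _ ≤ ∫⁻ z in dBox j m, dKmu ν μ z ∂ν := setLIntegral_mono' (measurableSet_dBox j m)
        fun _ hz => le_iSup₂_of_le j m (le_iSup_of_le hz le_rfl)

/-- On every box where `g` has a positive average, `μ` is dominated by `ν.withDensity (dKmu ν μ)`;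
the covering lemma turns this into domination of the distribution functions of `dMax ν g`. -/
lemma lintegral_dMax_rpow_le_withDensity_dKmu (ν μ : Measure ℂ) (g : ℂ → ℝ≥0∞) {r : ℝ}
    (hr : 0 < r) :
    ∫⁻ z, dMax ν g z ^ r ∂μ ≤ ∫⁻ z, dMax ν g z ^ r ∂ν.withDensity (dKmu ν μ) :=
  lintegral_rpow_le_of_forall_measure_lt_le (measurable_dMax ν g) hr fun _ =>
    measure_lt_dMax_le fun j m hlt => by
      obtain ⟨h0, htop⟩ := measure_dBox_ne_zero_ne_top_of_lt_dAvg hlt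
      rw [withDensity_apply _ (measurableSet_dBox j m)]
      exact measure_dBox_le_setLIntegral_dKmu h0 htop

/-- Hölder with exponents `p / q` and `p / (p - q)` after the Carleson comparison, then Doob. -/
theorem lintegral_dMax_rpow_rpow_le (ν μ : Measure ℂ) {g : ℂ → ℝ≥0∞} (hg : Measurable g)
    {p q : ℝ} (hq : 0 < q) (hqp : q < p) (hp : 1 < p) :
    (∫⁻ z, dMax ν g z ^ q ∂μ) ^ (1 / q) ≤
      ENNReal.ofReal (2 ^ p * p / (p - 1)) ^ (1 / p) *
        (∫⁻ z, dKmu ν μ z ^ (p / (p - q)) ∂ν) ^ ((p - q) / (p * q)) *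
        (∫⁻ z, g z ^ p ∂ν) ^ (1 / p) := by
  have hp0 : 0 < p := hq.trans hqp
  have hconj : (p / q).HolderConjugate (p / (p - q)) := by
    refine Real.holderConjugate_iff.mpr ⟨(one_lt_div hq).mpr hqp, ?_⟩
    rw [inv_div, inv_div, ← add_div, add_sub_cancel, div_self hp0.ne']
  set A := ENNReal.ofReal (2 ^ p * p / (p - 1))
  set B := ∫⁻ z, dKmu ν μ z ^ (p / (p - q)) ∂ν
  set X := ∫⁻ z, g z ^ p ∂ν
  have hqth : ∫⁻ z, dMax ν g z ^ q ∂μ ≤ (A * X) ^ (q / p) * B ^ ((p - q) / p) :=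
    calc ∫⁻ z, dMax ν g z ^ q ∂μ
        ≤ ∫⁻ z, dMax ν g z ^ q ∂ν.withDensity (dKmu ν μ) :=
          lintegral_dMax_rpow_le_withDensity_dKmu ν μ g hq
      _ = ∫⁻ z, ((fun z => dMax ν g z ^ q) * dKmu ν μ) z ∂ν := by
          rw [lintegral_withDensity_eq_lintegral_mul _ (measurable_dKmu ν μ)
            ((measurable_dMax ν g).pow_const q)]
          simp only [Pi.mul_apply, mul_comm]
      _ ≤ (∫⁻ z, (dMax ν g z ^ q) ^ (p / q) ∂ν) ^ (1 / (p / q)) * B ^ (1 / (p / (p - q))) :=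
          ENNReal.lintegral_mul_le_Lp_mul_Lq ν hconj
            ((measurable_dMax ν g).pow_const q).aemeasurable (measurable_dKmu ν μ).aemeasurable
      _ ≤ (A * X) ^ (q / p) * B ^ ((p - q) / p) := by
          simp_rw [one_div_div, ← ENNReal.rpow_mul, mul_div_cancel₀ p hq.ne']
          gcongr
          exact lintegral_dMax_rpow_le ν hg hp
  calc (∫⁻ z, dMax ν g z ^ q ∂μ) ^ (1 / q)
      ≤ ((A * X) ^ (q / p) * B ^ ((p - q) / p)) ^ (1 / q) := by gcongr
    _ = A ^ (1 / p) * B ^ ((p - q) / (p * q)) * X ^ (1 / p) := by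
        rw [ENNReal.mul_rpow_of_nonneg _ _ (by positivity), ← ENNReal.rpow_mul, ← ENNReal.rpow_mul,
          ENNReal.mul_rpow_of_nonneg _ _ (by positivity),
          show q / p * (1 / q) = 1 / p by field_simp,
          show (p - q) / p * (1 / q) = (p - q) / (p * q) by field_simp]
        ring

lemma withDensity_restrict_UHP_dBox (ω : ℂ → ℝ≥0∞) (j m : ℤ) :
    (volume.withDensity ω).restrict UHP (dBox j m) = wMass ω (dBox j m) := by
  rw [Measure.restrict_eq_self _ (dBox_subset_UHP j m),
    withDensity_apply _ (measurableSet_dBox j m), wMass]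

lemma lintegral_withDensity_restrict_UHP {ω : ℂ → ℝ≥0∞} (hω : Measurable ω) {h : ℂ → ℝ≥0∞}
    (hh : Measurable h) :
    ∫⁻ z, h z ∂(volume.withDensity ω).restrict UHP = ∫⁻ z in UHP, h z * ω z := by
  rw [setLIntegral_withDensity_eq_setLIntegral_mul _ hω hh measurableSet_UHP]
  simp only [Pi.mul_apply, mul_comm]

lemma maxDW_eq_dMax {ω : ℂ → ℝ≥0∞} (hω : Measurable ω) {f : ℂ → ℂ} (hf : Measurable f) :
    maxDW ω f = dMax ((volume.withDensity ω).restrict UHP) fun z => (‖f z‖₊ : ℝ≥0∞) := by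
  ext z
  refine iSup_congr fun j => iSup_congr fun m => iSup_congr fun _ => ?_
  rw [dAvg, Measure.restrict_restrict_of_subset (dBox_subset_UHP j m),
    withDensity_restrict_UHP_dBox, setLIntegral_withDensity_eq_setLIntegral_mul _ hω
      hf.nnnorm.coe_nnreal_ennreal (measurableSet_dBox j m)]
  simp only [Pi.mul_apply, mul_comm]

lemma dKmu_le_Kmu (ω : ℂ → ℝ≥0∞) (μ : Measure ℂ) (z : ℂ) :
    dKmu ((volume.withDensity ω).restrict UHP) μ z ≤ Kmu ω μ z :=
  iSup_le fun j => iSup₂_le fun m hz => by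
    have hlt : (2 : ℝ) ^ j * m < 2 ^ j * (m + 1) :=
      mul_lt_mul_of_pos_left (lt_add_one _) (zpow_pos two_pos j)
    rw [withDensity_restrict_UHP_dBox]
    exact le_iSup₂_of_le _ _ (le_iSup₂_of_le hlt hz le_rfl)

theorem dyadic_maximal_carleson_embedding_loss_general (p q : ℝ) (hq : 1 ≤ q) (hqp : q < p)
    (ω : ℂ → ℝ≥0∞) (hω : Measurable ω)
    (μ : Measure ℂ)
    (hK : (∫⁻ z in UHP, Kmu ω μ z ^ (p / (p - q)) * ω z) < ⊤) :
    ∃ C : ℝ≥0∞, 0 < C ∧ C < ⊤ ∧ ∀ f : ℂ → ℂ, Measurable f →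
      (∫⁻ z in UHP, maxDW ω f z ^ q ∂μ) ^ (1 / q) ≤
        C * (∫⁻ z in UHP, (‖f z‖₊ : ℝ≥0∞) ^ p * ω z) ^ (1 / p) := by
  set ν := (volume.withDensity ω).restrict UHP
  set K := ∫⁻ z in UHP, Kmu ω μ z ^ (p / (p - q)) * ω z
  have hp : 1 < p := hq.trans_lt hqp
  have hpq : 0 < p - q := sub_pos.mpr hqp
  set C := ENNReal.ofReal (2 ^ p * p / (p - 1)) ^ (1 / p) * K ^ ((p - q) / (p * q))
  have hC : C < ⊤ := ENNReal.mul_lt_top (ENNReal.rpow_lt_top_of_nonneg (by positivity)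
    ENNReal.ofReal_ne_top) (ENNReal.rpow_lt_top_of_nonneg (by positivity) hK.ne)
  refine ⟨C + 1, by positivity, ENNReal.add_lt_top.mpr ⟨hC, ENNReal.one_lt_top⟩, fun f hf => ?_⟩
  have hg : Measurable fun z => (‖f z‖₊ : ℝ≥0∞) := hf.nnnorm.coe_nnreal_ennreal
  calc (∫⁻ z in UHP, maxDW ω f z ^ q ∂μ) ^ (1 / q)
      ≤ (∫⁻ z, dMax ν (fun z => (‖f z‖₊ : ℝ≥0∞)) z ^ q ∂μ) ^ (1 / q) := by
        rw [maxDW_eq_dMax hω hf]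
        gcongr
        exact Measure.restrict_le_self
    _ ≤ _ := lintegral_dMax_rpow_rpow_le ν μ hg (by linarith) hqp hp
    _ ≤ C * (∫⁻ z in UHP, (‖f z‖₊ : ℝ≥0∞) ^ p * ω z) ^ (1 / p) := by
        rw [lintegral_withDensity_restrict_UHP hω (hg.pow_const p),
          lintegral_withDensity_restrict_UHP hω ((measurable_dKmu ν μ).pow_const _)]
        unfold C K
        gcongr with z
        exact dKmu_le_Kmu ω μ z
    _ ≤ (C + 1) * (∫⁻ z in UHP, (‖f z‖₊ : ℝ≥0∞) ^ p * ω z) ^ (1 / p) := by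
        gcongr
        exact le_self_add

/-- Lemma: for `1 ≤ q < p < ∞`, `ω ∈ B_p`, and `μ` a positive Borel measure on `𝓗` such
that `K_μ ∈ L^s_ω(𝓗)` with `s = p/(p-q)`, the dyadic maximal Carleson embedding
`(∫_𝓗 (M_{d,ω} f)^q dμ)^{1/q} ≤ C ‖f‖_{p,ω}` holds. -/
theorem dyadic_maximal_carleson_embedding_loss (p q : ℝ) (hq : 1 ≤ q) (hqp : q < p)
    (ω : ℂ → ℝ≥0∞) (hω : Measurable ω) (hBp : BBconst ω p < ⊤)
    (μ : Measure ℂ)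
    (hK : (∫⁻ z in UHP, Kmu ω μ z ^ (p / (p - q)) * ω z) < ⊤) :
    ∃ C : ℝ≥0∞, 0 < C ∧ C < ⊤ ∧ ∀ f : ℂ → ℂ, Measurable f →
      (∫⁻ z in UHP, maxDW ω f z ^ q ∂μ) ^ (1 / q) ≤
        C * (∫⁻ z in UHP, (‖f z‖₊ : ℝ≥0∞) ^ p * ω z) ^ (1 / p) :=
  dyadic_maximal_carleson_embedding_loss_general p q hq hqp ω hω μ hK
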